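/- In any pure Nash equilibrium θ† of a test-time compute game with perfectly rational users, the dominant provider selects θ†_1 = max{θ_1 ∈ Θ : V_1(θ_1) > V*_2}, the largest (with respect to the total order on Θ) compute level under which their offered value still strictly exceeds the best achievable value of any competitor. -/

import Mathlib

/-!
At any profile, the dominant provider can take the whole market by moving to a level `t` with
`V_1(t) > V*_2`, which earns a positive profit; so in equilibrium it already wins, and since profit
is strictly increasing in compute it earns at least the profit of every such `t`, forcing
`t ≤ θ†_1`. If some competitor could offer more than `V_1(θ†_1)`, it would deviate and take the
market from the equilibrium winner, so `V_1(θ†_1) > V*_2`.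
-/

open scoped Classical

/-- Utility of provider `i` in the test-time compute game with perfectly rational users:
full market share iff the offered value `V_i(θ_i) = q_i(θ_i) − p_i(θ_i)` strictly exceeds
every competitor's offered value and the abstention value `V₀`, times the profit. -/
noncomputable def perfectU (N : ℕ) (Θ : Type*) (p c q : Fin N → Θ → ℝ) (V₀ : ℝ)
    (i : Fin N) (θv : Fin N → Θ) : ℝ :=
  (if (∀ j, j ≠ i → q j (θv j) - p j (θv j) < q i (θv i) - p i (θv i)) ∧
      V₀ < q i (θv i) - p i (θv i) then (1 : ℝ) else 0) * (p i (θv i) - c i (θv i))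

open Function

def IsPureNash {ι Θ : Type*} [DecidableEq ι] (u : ι → (ι → Θ) → ℝ) (θv : ι → Θ) : Prop :=
  ∀ i t, u i (update θv i t) ≤ u i θv

section Game

variable {N : ℕ} {Θ : Type*} (p c q : Fin N → Θ → ℝ) (V₀ : ℝ)

def WinsMarket (i : Fin N) (θv : Fin N → Θ) : Prop :=
  (∀ j, j ≠ i → q j (θv j) - p j (θv j) < q i (θv i) - p i (θv i)) ∧
    V₀ < q i (θv i) - p i (θv i)

variable {p c q V₀}

theorem perfectU_eq_ite (i : Fin N) (θv : Fin N → Θ) :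
    perfectU N Θ p c q V₀ i θv =
      if WinsMarket p q V₀ i θv then p i (θv i) - c i (θv i) else 0 := by
  unfold perfectU WinsMarket
  split_ifs <;> simp

theorem perfectU_of_winsMarket {i : Fin N} {θv : Fin N → Θ} (h : WinsMarket p q V₀ i θv) :
    perfectU N Θ p c q V₀ i θv = p i (θv i) - c i (θv i) := by
  rw [perfectU_eq_ite, if_pos h]

theorem winsMarket_of_perfectU_pos {i : Fin N} {θv : Fin N → Θ}
    (h : 0 < perfectU N Θ p c q V₀ i θv) : WinsMarket p q V₀ i θv := by
  rw [perfectU_eq_ite] at h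
  by_contra hw
  rw [if_neg hw] at h
  exact h.false

theorem winsMarket_update_iff {i : Fin N} {θv : Fin N → Θ} {t : Θ} :
    WinsMarket p q V₀ i (update θv i t) ↔
      (∀ j, j ≠ i → q j (θv j) - p j (θv j) < q i t - p i t) ∧ V₀ < q i t - p i t := by
  unfold WinsMarket
  simp only [update_self]
  refine and_congr_left' (forall₂_congr fun j hj => ?_)
  rw [update_of_ne hj]

theorem WinsMarket.value_lt {k : Fin N} {θv : Fin N → Θ} (hk : WinsMarket p q V₀ k θv) {v : ℝ}
    (hv : q k (θv k) - p k (θv k) < v) (j : Fin N) : q j (θv j) - p j (θv j) < v := by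
  rcases eq_or_ne j k with rfl | hjk
  · exact hv
  · exact (hk.1 j hjk).trans hv

theorem WinsMarket.not_winsMarket {k : Fin N} {θv : Fin N → Θ} (hk : WinsMarket p q V₀ k θv)
    {i : Fin N} (hik : i ≠ k) : ¬ WinsMarket p q V₀ i θv :=
  fun hi => (hk.1 i hik).asymm (hi.1 k hik.symm)

theorem IsPureNash.winsMarket_and_profit_le {θv : Fin N → Θ}
    (hNE : IsPureNash (perfectU N Θ p c q V₀) θv) {i : Fin N} {t : Θ}
    (hprofit : 0 < p i t - c i t) (hdev : WinsMarket p q V₀ i (update θv i t)) :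
    WinsMarket p q V₀ i θv ∧ p i t - c i t ≤ p i (θv i) - c i (θv i) := by
  have hle : p i t - c i t ≤ perfectU N Θ p c q V₀ i θv := by
    simpa only [perfectU_of_winsMarket hdev, update_self] using hNE i t
  have hwin : WinsMarket p q V₀ i θv := winsMarket_of_perfectU_pos (hprofit.trans_le hle)
  exact ⟨hwin, perfectU_of_winsMarket hwin ▸ hle⟩

end Game

/-- **The dominant provider's equilibrium compute level.** In any pure Nash equilibrium
`θ†` of a test-time compute game with perfectly rational users, the dominant provider
(index `0`) selects `θ†_1 = max {θ : V_1(θ) > V*_2}`: the largest compute level (w.r.t. the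
total order on `Θ`) under which their offered value still strictly exceeds the best
achievable value `V*_2` of any competitor. Here `V_1(θ) > V*_2` is expressed as
`∀ i ≠ 0, ∀ θᵢ, V_i(θᵢ) < V_1(θ)`. -/
theorem dominant_provider_equilibrium_compute (N : ℕ) (Θ : Type*)
    [LinearOrder Θ] (p c q : Fin N → Θ → ℝ) (V₀ : ℝ)
    (hN : 2 ≤ N)
    (hties : ∀ (i j : Fin N) (t t' : Θ), i ≠ j →
      q i t - p i t ≠ q j t' - p j t')
    (hprofit : ∀ (i : Fin N) (t : Θ), 0 < p i t - c i t)
    (hmono : ∀ i : Fin N, StrictMono (fun t => p i t - c i t))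
    (hV₀ : ∀ (i : Fin N) (t : Θ), V₀ < q i t - p i t)
    (hex : ∃ t₁ : Θ, ∀ i : Fin N, i ≠ ⟨0, by omega⟩ → ∀ t : Θ,
      q i t - p i t < q (⟨0, by omega⟩ : Fin N) t₁ - p (⟨0, by omega⟩ : Fin N) t₁)
    (θd : Fin N → Θ)
    (hNE : ∀ (i : Fin N) (t' : Θ),
      perfectU N Θ p c q V₀ i (Function.update θd i t') ≤ perfectU N Θ p c q V₀ i θd) :
    (∀ i : Fin N, i ≠ ⟨0, by omega⟩ → ∀ t : Θ,
      q i t - p i t <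
        q (⟨0, by omega⟩ : Fin N) (θd ⟨0, by omega⟩) -
          p (⟨0, by omega⟩ : Fin N) (θd ⟨0, by omega⟩)) ∧
    (∀ t₁ : Θ,
      (∀ i : Fin N, i ≠ ⟨0, by omega⟩ → ∀ t : Θ,
        q i t - p i t < q (⟨0, by omega⟩ : Fin N) t₁ - p (⟨0, by omega⟩ : Fin N) t₁) →
      t₁ ≤ θd ⟨0, by omega⟩) := by
  set z : Fin N := ⟨0, by omega⟩
  have hNash : IsPureNash (perfectU N Θ p c q V₀) θd := hNE
  have hz_dev : ∀ t, (∀ i, i ≠ z → ∀ t', q i t' - p i t' < q z t - p z t) →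
      WinsMarket p q V₀ z (update θd z t) :=
    fun t ht => winsMarket_update_iff.2 ⟨fun j hj => ht j hj _, hV₀ z t⟩
  obtain ⟨t₁, ht₁⟩ := hex
  have hz : WinsMarket p q V₀ z θd :=
    (hNash.winsMarket_and_profit_le (hprofit z t₁) (hz_dev t₁ ht₁)).1
  refine ⟨fun i hi t => ?_, fun t ht => ?_⟩
  · by_contra! hle
    have hlt := hle.lt_of_ne (hties z i _ _ hi.symm)
    have hi_dev : WinsMarket p q V₀ i (update θd i t) :=
      winsMarket_update_iff.2 ⟨fun j _ => hz.value_lt hlt j, hV₀ i t⟩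
    exact hz.not_winsMarket hi (hNash.winsMarket_and_profit_le (hprofit i t) hi_dev).1
  · exact (hmono z).le_iff_le.1 (hNash.winsMarket_and_profit_le (hprofit z t) (hz_dev t ht)).2
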